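/- arXiv:0904.3783 — 7 statements merged into one kernel-verified Lean document; each statement's English description precedes it below -/
import Mathlib

section
/- Let (V,V^+,e) be an AOU space, let (W, {C_n}) be a matrix ordered *-vector space, and let φ : W → OMIN(V) be a positive linear map. Then φ is completely positive. -/
open scoped ComplexOrder
open Finset

noncomputable section

section Defs
variable {V : Type*} [AddCommGroup V] [Module ℂ V]

/-- The elementary tensor `a ⊗ v` in `M_n(V) ≅ M_n(ℂ) ⊗ V`. -/
def eTensor {n : ℕ} (a : Matrix (Fin n) (Fin n) ℂ) (v : V) : Matrix (Fin n) (Fin n) V :=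
  Matrix.of fun p q => a p q • v

/-- The conjugation `X* A X` of `A ∈ M_n(V)` by a scalar matrix `X ∈ M_{n,m}(ℂ)`. -/
def mconj {n m : ℕ} (X : Matrix (Fin n) (Fin m) ℂ) (A : Matrix (Fin n) (Fin n) V) :
    Matrix (Fin m) (Fin m) V :=
  Matrix.of fun i j => ∑ k, ∑ l, (star (X k i) * X l j) • A k l

/-- The diagonal matrix `e_n` with `e` in each diagonal entry. -/
def eMat (e : V) (n : ℕ) : Matrix (Fin n) (Fin n) V :=
  Matrix.of fun i j => if i = j then e else 0

/-- The minimal cone `C_n^min(V)`. -/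
def Cmin (pos : Set V) (n : ℕ) : Set (Matrix (Fin n) (Fin n) V) :=
  {M | ∀ lam : Fin n → ℂ, (∑ i, ∑ j, (star (lam i) * lam j) • M i j) ∈ pos}

/-- The cone `D_n^max(V)` of sums of tensors `a ⊗ v` with `a ∈ M_n⁺`, `v ∈ V⁺`. -/
def Dmax (pos : Set V) (n : ℕ) : Set (Matrix (Fin n) (Fin n) V) :=
  {M | ∃ (k : ℕ) (a : Fin k → Matrix (Fin n) (Fin n) ℂ) (v : Fin k → V),
    (∀ i, (a i).PosSemidef) ∧ (∀ i, v i ∈ pos) ∧ M = ∑ i, eTensor (a i) (v i)}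

/-- The maximal cone `C_n^max(V)`: the Archimedeanization of `D_n^max(V)`. -/
def Cmax (pos : Set V) (e : V) (n : ℕ) : Set (Matrix (Fin n) (Fin n) V) :=
  {M | ∀ r : ℝ, 0 < r → (r : ℂ) • eMat e n + M ∈ Dmax pos n}

end Defs

section StarDefs
variable {V : Type*} [AddCommGroup V] [Module ℂ V] [StarAddMonoid V] [StarModule ℂ V]

/-- `(V, pos)` is an ordered `*`-vector space. -/
def IsOrderedStar (pos : Set V) : Prop :=
  (∀ v ∈ pos, star v = v) ∧
  (∀ r : ℝ, 0 ≤ r → ∀ v ∈ pos, (r : ℂ) • v ∈ pos) ∧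
  (∀ v ∈ pos, ∀ w ∈ pos, v + w ∈ pos) ∧
  (∀ v ∈ pos, -v ∈ pos → v = 0)

/-- `(V, pos, e)` is an Archimedean order unit (AOU) space. -/
def IsAOU (pos : Set V) (e : V) : Prop :=
  IsOrderedStar pos ∧ star e = e ∧
  (∀ v : V, star v = v → ∃ r : ℝ, 0 < r ∧ (r : ℂ) • e - v ∈ pos) ∧
  (∀ v : V, (∀ r : ℝ, 0 < r → (r : ℂ) • e + v ∈ pos) → v ∈ pos)

/-- A state on `(V, pos, e)`: a unital positive linear functional. -/
def IsState (pos : Set V) (e : V) (s : V →ₗ[ℂ] ℂ) : Prop :=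
  s e = 1 ∧ ∀ v ∈ pos, 0 ≤ s v

/-- A positive linear functional. -/
def IsPosFunc (pos : Set V) (f : V →ₗ[ℂ] ℂ) : Prop := ∀ v ∈ pos, 0 ≤ f v

/-- A matrix ordering on the `*`-vector space `V`. -/
def IsMatrixOrdering (C : ∀ n : ℕ, Set (Matrix (Fin n) (Fin n) V)) : Prop :=
  (∀ (n : ℕ) (M : Matrix (Fin n) (Fin n) V), M ∈ C n → star M = M) ∧
  (∀ (n : ℕ) (r : ℝ), 0 ≤ r → ∀ M ∈ C n, (r : ℂ) • M ∈ C n) ∧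
  (∀ n : ℕ, ∀ M ∈ C n, ∀ N ∈ C n, M + N ∈ C n) ∧
  (∀ n : ℕ, ∀ M ∈ C n, -M ∈ C n → M = 0) ∧
  (∀ (n m : ℕ) (X : Matrix (Fin n) (Fin m) ℂ), ∀ M ∈ C n, mconj X M ∈ C m)

/-- `e` is a matrix order unit for the family `C`. -/
def IsMatrixOrderUnit (C : ∀ n : ℕ, Set (Matrix (Fin n) (Fin n) V)) (e : V) : Prop :=
  star e = e ∧
  ∀ (n : ℕ) (M : Matrix (Fin n) (Fin n) V), star M = M →
    ∃ r : ℝ, 0 < r ∧ (r : ℂ) • eMat e n - M ∈ C n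

/-- `e` is an Archimedean matrix order unit for the family `C`. -/
def IsArchMatrixOrderUnit (C : ∀ n : ℕ, Set (Matrix (Fin n) (Fin n) V)) (e : V) : Prop :=
  IsMatrixOrderUnit C e ∧
  ∀ (n : ℕ) (M : Matrix (Fin n) (Fin n) V),
    (∀ r : ℝ, 0 < r → (r : ℂ) • eMat e n + M ∈ C n) → M ∈ C n

/-- `(V, C, e)` is an (abstract) operator system. -/
def IsOperatorSystem (C : ∀ n : ℕ, Set (Matrix (Fin n) (Fin n) V)) (e : V) : Prop :=
  IsMatrixOrdering C ∧ IsArchMatrixOrderUnit C e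

/-- The ground-level cone of a matrix ordering, under `M_1(V) ≅ V`. -/
def groundPos (C : ∀ n : ℕ, Set (Matrix (Fin n) (Fin n) V)) : Set V :=
  {v | (Matrix.of fun _ _ : Fin 1 => v) ∈ C 1}

/-- An operator system structure on the AOU space `(V, pos, e)`. -/
def IsOpSysStructure (pos : Set V) (e : V) (C : ∀ n : ℕ, Set (Matrix (Fin n) (Fin n) V)) :
    Prop :=
  IsOperatorSystem C e ∧ C 1 = {M | M 0 0 ∈ pos}

end StarDefs

section DualDefs
variable {V : Type*} [AddCommGroup V] [Module ℂ V] [StarAddMonoid V] [StarModule ℂ V]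

/-- The adjoint functional `f*` with `f*(v) = conj (f (v*))`. -/
def starFunc (f : V →ₗ[ℂ] ℂ) : V →ₗ[ℂ] ℂ where
  toFun v := star (f (star v))
  map_add' v w := by simp
  map_smul' c v := by simp [star_smul, map_smul, mul_comm]

/-- The pairing between a matrix of functionals and a matrix over `V`:
`(f_{ij})((v_{ij})) = ∑_{ij} f_{ij}(v_{ij})`. -/
def dPair {n : ℕ} (F : Matrix (Fin n) (Fin n) (V →ₗ[ℂ] ℂ))
    (A : Matrix (Fin n) (Fin n) V) : ℂ :=
  ∑ i, ∑ j, F i j (A i j)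

/-- The dual cones `P_n^d` of a matrix ordering on `V`. -/
def dualCones (P : ∀ n : ℕ, Set (Matrix (Fin n) (Fin n) V)) (n : ℕ) :
    Set (Matrix (Fin n) (Fin n) (V →ₗ[ℂ] ℂ)) :=
  {F | ∀ A ∈ P n, 0 ≤ dPair F A}

/-- The predual cones `^dQ_n` of a matrix ordering on `V'`. -/
def preCones (Q : ∀ n : ℕ, Set (Matrix (Fin n) (Fin n) (V →ₗ[ℂ] ℂ))) (n : ℕ) :
    Set (Matrix (Fin n) (Fin n) V) :=
  {A | ∀ F ∈ Q n, 0 ≤ dPair F A}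

/-- A matrix ordering on the dual space `V'` (hermitian via `starFunc`,
compatibility under conjugation by scalar matrices). -/
def IsDualMatrixOrdering (Q : ∀ n : ℕ, Set (Matrix (Fin n) (Fin n) (V →ₗ[ℂ] ℂ))) : Prop :=
  (∀ (n : ℕ) (F : Matrix (Fin n) (Fin n) (V →ₗ[ℂ] ℂ)), F ∈ Q n →
    ∀ i j, F i j = starFunc (F j i)) ∧
  (∀ (n : ℕ) (r : ℝ), 0 ≤ r → ∀ F ∈ Q n, (r : ℂ) • F ∈ Q n) ∧
  (∀ n : ℕ, ∀ F ∈ Q n, ∀ G ∈ Q n, F + G ∈ Q n) ∧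
  (∀ n : ℕ, ∀ F ∈ Q n, -F ∈ Q n → F = 0) ∧
  (∀ (n m : ℕ) (X : Matrix (Fin n) (Fin m) ℂ), ∀ F ∈ Q n, mconj X F ∈ Q m)

/-- Weak*-closedness of a set of matrices of functionals: closedness in the topology
induced by the pairing against all of `M_n(V)`, with the topology of pointwise convergence. -/
def WeakStarClosed {n : ℕ} (Q : Set (Matrix (Fin n) (Fin n) (V →ₗ[ℂ] ℂ))) : Prop :=
  @IsClosed _ (TopologicalSpace.induced
    (fun F : Matrix (Fin n) (Fin n) (V →ₗ[ℂ] ℂ) => fun A => dPair F A)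
    Pi.topologicalSpace) Q

/-- The minimal norm on an AOU space: `‖v‖_m = sup { |s(v)| : s a state }`. -/
def minNorm (pos : Set V) (e : V) (v : V) : ℝ :=
  ⨆ s : {s : V →ₗ[ℂ] ℂ // IsState pos e s}, ‖s.1 v‖

/-- Bounded (continuous) linear functionals on `V`. -/
def IsBddFunc (pos : Set V) (e : V) (f : V →ₗ[ℂ] ℂ) : Prop :=
  ∃ c : ℝ, ∀ v, ‖f v‖ ≤ c * minNorm pos e v

end DualDefs

end

/-! Positivity in `C_n^min(V)` is tested on the compressions `λ* M λ`, and `λ* M λ` is the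
conjugate `X* M X` by the column `X = λ`. Compatibility of the matrix ordering with such
conjugations puts `λ* M λ` in the ground cone of `W`, while every linear map
commutes with compressions. -/

section Compression
variable {V : Type*} [AddCommGroup V] [Module ℂ V]

def compress {n : ℕ} (lam : Fin n → ℂ) (M : Matrix (Fin n) (Fin n) V) : V :=
  ∑ i, ∑ j, (star (lam i) * lam j) • M i j

theorem mconj_replicateCol {n : ℕ} (lam : Fin n → ℂ) (M : Matrix (Fin n) (Fin n) V) :
    mconj (Matrix.replicateCol (Fin 1) lam) M = Matrix.of fun _ _ => compress lam M := by
  ext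
  simp [mconj, compress]

theorem map_compress {W : Type*} [AddCommGroup W] [Module ℂ W] (φ : W →ₗ[ℂ] V) {n : ℕ}
    (lam : Fin n → ℂ) (M : Matrix (Fin n) (Fin n) W) :
    φ (compress lam M) = compress lam (M.map φ) := by
  simp [compress, map_sum, map_smul]

end Compression

theorem compress_mem_groundPos {W : Type*} [AddCommGroup W] [Module ℂ W] [StarAddMonoid W]
    [StarModule ℂ W] {D : ∀ n : ℕ, Set (Matrix (Fin n) (Fin n) W)} (hD : IsMatrixOrdering D)
    {n : ℕ} {M : Matrix (Fin n) (Fin n) W} (hM : M ∈ D n) (lam : Fin n → ℂ) :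
    compress lam M ∈ groundPos D := by
  have hconj := hD.2.2.2.2 n 1 (Matrix.replicateCol (Fin 1) lam) M hM
  rwa [mconj_replicateCol] at hconj

theorem positive_into_OMIN_is_completelyPositive_general
    {V : Type*} [AddCommGroup V] [Module ℂ V]
    {W : Type*} [AddCommGroup W] [Module ℂ W] [StarAddMonoid W] [StarModule ℂ W]
    (pos : Set V)
    (D : ∀ n : ℕ, Set (Matrix (Fin n) (Fin n) W)) (hD : IsMatrixOrdering D)
    (φ : W →ₗ[ℂ] V) (hpos : ∀ w ∈ groundPos D, φ w ∈ pos) :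
    ∀ n : ℕ, ∀ M ∈ D n, M.map φ ∈ Cmin pos n := by
  intro n M hM lam
  change compress lam (M.map φ) ∈ pos
  rw [← map_compress]
  exact hpos _ (compress_mem_groundPos hD hM lam)

/-- Every positive linear map from a matrix ordered `*`-vector space
into `OMIN(V)` is completely positive. -/
theorem positive_into_OMIN_is_completelyPositive
    {V : Type*} [AddCommGroup V] [Module ℂ V] [StarAddMonoid V] [StarModule ℂ V]
    {W : Type*} [AddCommGroup W] [Module ℂ W] [StarAddMonoid W] [StarModule ℂ W]
    (pos : Set V) (e : V) (hA : IsAOU pos e)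
    (D : ∀ n : ℕ, Set (Matrix (Fin n) (Fin n) W)) (hD : IsMatrixOrdering D)
    (φ : W →ₗ[ℂ] V) (hpos : ∀ w ∈ groundPos D, φ w ∈ pos) :
    ∀ n : ℕ, ∀ M ∈ D n, M.map φ ∈ Cmin pos n :=
  positive_into_OMIN_is_completelyPositive_general pos D hD φ hpos
end

section
/- Let (V,V^+,e) be an AOU space. If {C_n} is any operator system structure on (V,V^+,e) (so C_1 = V^+), then C_n ⊆ C_n^min(V) for all n; i.e., OMIN is the weakest operator system structure on V. -/
open scoped ComplexOrder
open Finset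

theorem mem_Cmin_iff_mconj_mem {V : Type*} [AddCommGroup V] [Module ℂ V] (pos : Set V)
    {n : ℕ} (M : Matrix (Fin n) (Fin n) V) :
    M ∈ Cmin pos n ↔ ∀ x : Matrix (Fin n) (Fin 1) ℂ, mconj x M 0 0 ∈ pos :=
  ⟨fun hM x => hM fun k => x k 0, fun hM lam => hM (Matrix.of fun k _ => lam k)⟩

theorem opSysStructure_subset_Cmin_general
    {V : Type*} [AddCommGroup V] [Module ℂ V] [StarAddMonoid V] [StarModule ℂ V]
    (pos : Set V) (e : V)
    (C : ∀ n : ℕ, Set (Matrix (Fin n) (Fin n) V)) (hC : IsOpSysStructure pos e C) :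
    ∀ n : ℕ, C n ⊆ Cmin pos n := by
  obtain ⟨⟨hord, -⟩, hC1⟩ := hC
  intro n M hM
  rw [mem_Cmin_iff_mconj_mem]
  intro x
  have hx : mconj x M ∈ C 1 := hord.2.2.2.2 n 1 x M hM
  rwa [hC1] at hx

/-- `OMIN` is the weakest operator system structure on an AOU space:
any operator system structure `{C_n}` satisfies `C_n ⊆ C_n^min`. -/
theorem opSysStructure_subset_Cmin
    {V : Type*} [AddCommGroup V] [Module ℂ V] [StarAddMonoid V] [StarModule ℂ V]
    (pos : Set V) (e : V) (hA : IsAOU pos e)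
    (C : ∀ n : ℕ, Set (Matrix (Fin n) (Fin n) V)) (hC : IsOpSysStructure pos e C) :
    ∀ n : ℕ, C n ⊆ Cmin pos n :=
  opSysStructure_subset_Cmin_general pos e C hC
end

section
/- Let (V,V^+) be an ordered *-vector space and define D_n^max(V) = {∑_{i=1}^k a_i ⊗ v_i : a_i ∈ M_n^+, v_i ∈ V^+}. Then D_n^max(V) = {α diag(v_1,...,v_m) α* : α ∈ M_{n,m}(ℂ), v_i ∈ V^+, m ∈ ℕ}. -/
open scoped ComplexOrder
open Finset

/-
A positive semidefinite `a` factors as `b b*`, so `a ⊗ v = b diag(v, …, v) b*`; a sum of matrices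
`α_t diag(w_t) α_t*` is again of this form, with the `α_t` placed side by side and the `w_t`
concatenated. Conversely `α diag(v) α* = ∑_k α_k α_k* ⊗ v_k`, where `α_k` is the `k`-th column of
`α` and `α_k α_k*` is positive semidefinite.
-/

open scoped Matrix

theorem Matrix.PosSemidef.exists_eq_mul_conjTranspose {𝕜 : Type*} [RCLike 𝕜] {ι : Type*}
    [Fintype ι] {a : Matrix ι ι 𝕜} (ha : a.PosSemidef) : ∃ b, a = b * bᴴ := by
  classical
  open scoped MatrixOrder in exact CStarAlgebra.nonneg_iff_eq_mul_star_self.mp ha.nonneg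

section ConjDiag

variable {V : Type*} [AddCommGroup V] [Module ℂ V] {n : ℕ} {ι κ : Type*} [Fintype ι] [Fintype κ]

/-- The matrix `α diag(v) α*`. -/
def conjDiag (α : Matrix (Fin n) ι ℂ) (v : ι → V) : Matrix (Fin n) (Fin n) V :=
  Matrix.of fun i j => ∑ k, (α i k * star (α j k)) • v k

theorem conjDiag_eq_sum_eTensor (α : Matrix (Fin n) ι ℂ) (v : ι → V) :
    conjDiag α v =
      ∑ k, eTensor (Matrix.vecMulVec (fun i => α i k) (star fun i => α i k)) (v k) := by
  ext i j
  simp [conjDiag, eTensor, Matrix.sum_apply, Matrix.vecMulVec_apply]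

theorem conjDiag_const (α : Matrix (Fin n) ι ℂ) (v : V) :
    conjDiag α (fun _ => v) = eTensor (α * αᴴ) v := by
  ext i j
  simp [conjDiag, eTensor, Matrix.mul_apply, Finset.sum_smul]

theorem sum_conjDiag (α : κ → Matrix (Fin n) ι ℂ) (v : κ → ι → V) :
    ∑ t, conjDiag (α t) (v t) =
      conjDiag (Matrix.of fun i (p : κ × ι) => α p.1 i p.2) (fun p => v p.1 p.2) := by
  ext i j
  simp [conjDiag, Matrix.sum_apply, Fintype.sum_prod_type]

theorem conjDiag_reindex (e : ι ≃ κ) (α : Matrix (Fin n) ι ℂ) (v : ι → V) :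
    conjDiag α v = conjDiag (α.submatrix id e.symm) (v ∘ e.symm) := by
  ext i j
  exact (e.symm.sum_comp _).symm

theorem conjDiag_mem_Dmax {pos : Set V} (α : Matrix (Fin n) ι ℂ) {v : ι → V}
    (hv : ∀ k, v k ∈ pos) : conjDiag α v ∈ Dmax pos n := by
  rw [conjDiag_reindex (Fintype.equivFin ι), conjDiag_eq_sum_eTensor]
  exact ⟨_, _, _, fun _ => Matrix.posSemidef_vecMulVec_self_star _, fun _ => hv _, rfl⟩

theorem exists_conjDiag_of_mem_Dmax {pos : Set V} {M : Matrix (Fin n) (Fin n) V}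
    (hM : M ∈ Dmax pos n) :
    ∃ (m : ℕ) (α : Matrix (Fin n) (Fin m) ℂ) (v : Fin m → V), (∀ k, v k ∈ pos) ∧
      M = conjDiag α v := by
  obtain ⟨k, a, v, ha, hv, rfl⟩ := hM
  choose b hb using fun t => (ha t).exists_eq_mul_conjTranspose
  simp_rw [hb, ← conjDiag_const]
  rw [sum_conjDiag, conjDiag_reindex finProdFinEquiv]
  exact ⟨_, _, _, fun p => hv _, rfl⟩

end ConjDiag

theorem Dmax_eq_conj_diag_general
    {V : Type*} [AddCommGroup V] [Module ℂ V]
    (pos : Set V) (n : ℕ) :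
    Dmax pos n =
      {M | ∃ (m : ℕ) (α : Matrix (Fin n) (Fin m) ℂ) (v : Fin m → V),
        (∀ i, v i ∈ pos) ∧
        M = Matrix.of fun i j => ∑ k, (α i k * star (α j k)) • v k} :=
  Set.ext fun _ =>
    ⟨exists_conjDiag_of_mem_Dmax, fun ⟨_, α, _, hv, hM⟩ => hM ▸ conjDiag_mem_Dmax α hv⟩

/-- `D_n^max(V)` coincides with the set of all matrices of the form
`α diag(v_1, …, v_m) α*` with `α ∈ M_{n,m}(ℂ)` and `v_i ∈ V⁺`. -/
theorem Dmax_eq_conj_diag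
    {V : Type*} [AddCommGroup V] [Module ℂ V] [StarAddMonoid V] [StarModule ℂ V]
    (pos : Set V) (h : IsOrderedStar pos) (n : ℕ) :
    Dmax pos n =
      {M | ∃ (m : ℕ) (α : Matrix (Fin n) (Fin m) ℂ) (v : Fin m → V),
        (∀ i, v i ∈ pos) ∧
        M = Matrix.of fun i j => ∑ k, (α i k * star (α j k)) • v k} :=
  Dmax_eq_conj_diag_general pos n
end

section
/- Let (V,V^+,e) be an AOU space. Then D^max(V) = {D_n^max(V)} is a matrix ordering on V (in particular D_n^max ∩ −D_n^max = {0}), and e is a matrix order unit for this ordering: for every hermitian w ∈ M_n(V)_h there exists r > 0 with r e_n − w ∈ D_n^max(V). -/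
open scoped ComplexOrder
open Finset

/-!
Every element of `D_n^max` is a finite sum of tensors `a ⊗ v` with `a ≥ 0` and `v ∈ V⁺`, so the
cone axioms reduce to single tensors: `(a ⊗ v)* = a* ⊗ v*` and `X*(a ⊗ v)X = X*aX ⊗ v`.
Properness follows from `D_n^max ⊆ C_n^min`: if `±M ∈ C_n^min`, the `V`-valued sesquilinear form
`(x, y) ↦ ∑ x̄ᵢ yⱼ Mᵢⱼ` vanishes on the diagonal, hence everywhere by polarization, so `M = 0`.

For the order unit, a hermitian `M` is the real part of `∑ Eᵢⱼ ⊗ Mᵢⱼ`, and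
`Re (a ⊗ v) = Re a ⊗ Re v - Im a ⊗ Im v` is a combination of tensors of hermitian elements.
For hermitian `a` and `v` choose `t` with `t·1 ± a ≥ 0` (the C*-norm of `a`) and `s` with
`s·e ± v ∈ V⁺`; then `2 (ts·eₙ - a ⊗ v) = (t·1 + a) ⊗ (s·e - v) + (t·1 - a) ⊗ (s·e + v)`.
-/

open Matrix

theorem LinearMap.eq_zero_of_forall_apply_self_eq_zero {E W : Type*} [AddCommGroup E]
    [Module ℂ E] [AddCommGroup W] [Module ℂ W] (B : E →ₗ⋆[ℂ] E →ₗ[ℂ] W)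
    (h : ∀ x, B x x = 0) : B = 0 := by
  ext x y
  have hsum : B x y + B y x = 0 := by
    simpa [h x, h y] using h (x + y)
  have hdiff : B x y - B y x = 0 := by
    have hI := h (x + Complex.I • y)
    simp only [map_add, map_smulₛₗ, LinearMap.add_apply, LinearMap.smul_apply, h,
      Complex.conj_I, RingHom.id_apply, smul_zero, zero_add, add_zero] at hI
    refine (smul_eq_zero.mp ?_).resolve_left Complex.I_ne_zero
    linear_combination (norm := module) hI
  simp only [LinearMap.zero_apply]
  linear_combination (norm := module) (2⁻¹ : ℂ) • (hsum + hdiff)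

open scoped MatrixOrder Matrix.Norms.L2Operator in
lemma IsSelfAdjoint.exists_posSemidef_smul_one_sub_and_add {ι : Type*} [Fintype ι]
    [DecidableEq ι] {a : Matrix ι ι ℂ} (ha : IsSelfAdjoint a) :
    ∃ t : ℝ, ((t : ℂ) • 1 - a).PosSemidef ∧ ((t : ℂ) • 1 + a).PosSemidef := by
  refine ⟨‖a‖, ?_, ?_⟩
  · have hle := ha.le_algebraMap_norm_self
    rw [Matrix.le_iff, Algebra.algebraMap_eq_smul_one] at hle
    simpa using hle
  · have hle := ha.neg_algebraMap_norm_le_self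
    rw [Matrix.le_iff, Algebra.algebraMap_eq_smul_one] at hle
    simpa [add_comm] using hle

lemma smul_sub_mem_of_le {W : Type*} [AddCommGroup W] [Module ℂ W] {C : Set W}
    (hadd : ∀ x ∈ C, ∀ y ∈ C, x + y ∈ C) (hsmul : ∀ r : ℝ, 0 ≤ r → ∀ x ∈ C, (r : ℂ) • x ∈ C)
    {u : W} (hu : u ∈ C) {s s' : ℝ} (hs : s ≤ s') {x : W} (h : (s : ℂ) • u - x ∈ C) :
    (s' : ℂ) • u - x ∈ C := by
  have key : (s' : ℂ) • u - x = ((s : ℂ) • u - x) + ((s' - s : ℝ) : ℂ) • u := by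
    push_cast
    module
  exact key ▸ hadd _ h _ (hsmul _ (sub_nonneg.mpr hs) u hu)

namespace Matrix

variable {V : Type*} [AddCommGroup V] [Module ℂ V] {n : ℕ}

def sesqForm (M : Matrix (Fin n) (Fin n) V) : (Fin n → ℂ) →ₗ⋆[ℂ] (Fin n → ℂ) →ₗ[ℂ] V :=
  LinearMap.mk₂'ₛₗ (starRingEnd ℂ) (RingHom.id ℂ)
    (fun x y => ∑ i, ∑ j, (star (x i) * y j) • M i j)
    (fun x x' y => by simp [add_mul, add_smul, Finset.sum_add_distrib])
    (fun c x y => by simp [Finset.smul_sum, smul_smul, mul_assoc])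
    (fun x y y' => by simp [mul_add, add_smul, Finset.sum_add_distrib])
    (fun c x y => by simp [Finset.smul_sum, smul_smul, mul_left_comm])

lemma sesqForm_apply (M : Matrix (Fin n) (Fin n) V) (x y : Fin n → ℂ) :
    M.sesqForm x y = ∑ i, ∑ j, (star (x i) * y j) • M i j := rfl

lemma sesqForm_single_single (M : Matrix (Fin n) (Fin n) V) (i j : Fin n) :
    M.sesqForm (Pi.single i 1) (Pi.single j 1) = M i j := by
  simp [sesqForm_apply, Pi.single_apply]

lemma sesqForm_add (M N : Matrix (Fin n) (Fin n) V) :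
    (M + N).sesqForm = M.sesqForm + N.sesqForm := by
  ext x y
  simp [sesqForm_apply, smul_add, Finset.sum_add_distrib]

lemma sesqForm_neg (M : Matrix (Fin n) (Fin n) V) : (-M).sesqForm = -M.sesqForm := by
  ext x y
  simp [sesqForm_apply]

lemma eq_zero_of_sesqForm_eq_zero {M : Matrix (Fin n) (Fin n) V} (h : M.sesqForm = 0) :
    M = 0 := by
  ext i j
  rw [← sesqForm_single_single M i j, h]
  rfl

end Matrix

section ElementaryTensor

variable {V : Type*} [AddCommGroup V] [Module ℂ V] {n : ℕ}

lemma smul_eTensor (a : Matrix (Fin n) (Fin n) ℂ) (c : ℂ) (v : V) :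
    c • eTensor a v = eTensor a (c • v) := by
  ext i j
  simp [eTensor, smul_comm c]

lemma neg_eTensor (a : Matrix (Fin n) (Fin n) ℂ) (v : V) : -eTensor a v = eTensor (-a) v := by
  ext i j
  simp [eTensor, neg_smul]

lemma eTensor_one (e : V) : eTensor (1 : Matrix (Fin n) (Fin n) ℂ) e = eMat e n := by
  ext i j
  simp [eTensor, eMat, one_apply, ite_smul]

lemma eTensor_single_one (i j : Fin n) (v : V) :
    eTensor (single i j (1 : ℂ)) v = single i j v := by
  ext k l
  simp [eTensor, single_apply, ite_smul]

lemma sesqForm_eTensor (a : Matrix (Fin n) (Fin n) ℂ) (v : V) (x y : Fin n → ℂ) :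
    (eTensor a v).sesqForm x y = (star x ⬝ᵥ a *ᵥ y) • v := by
  simp only [sesqForm_apply, eTensor, of_apply, smul_smul, dotProduct, mulVec,
    Finset.mul_sum, Finset.sum_smul, Pi.star_apply]
  exact Finset.sum_congr rfl fun i _ => Finset.sum_congr rfl fun j _ => by ring_nf

lemma mconj_zero {m : ℕ} (X : Matrix (Fin n) (Fin m) ℂ) :
    mconj X (0 : Matrix (Fin n) (Fin n) V) = 0 := by
  ext i j
  simp [mconj]

lemma mconj_add {m : ℕ} (X : Matrix (Fin n) (Fin m) ℂ) (M N : Matrix (Fin n) (Fin n) V) :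
    mconj X (M + N) = mconj X M + mconj X N := by
  ext i j
  simp [mconj, smul_add, Finset.sum_add_distrib]

lemma mconj_eTensor {m : ℕ} (X : Matrix (Fin n) (Fin m) ℂ) (a : Matrix (Fin n) (Fin n) ℂ)
    (v : V) : mconj X (eTensor a v) = eTensor (Xᴴ * a * X) v := by
  ext i j
  simp only [mconj, eTensor, of_apply, mul_apply, conjTranspose_apply, smul_smul,
    Finset.sum_mul, Finset.sum_smul]
  rw [Finset.sum_comm]
  exact Finset.sum_congr rfl fun k _ => Finset.sum_congr rfl fun l _ => by ring_nf

variable [StarAddMonoid V] [StarModule ℂ V]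

lemma star_eTensor (a : Matrix (Fin n) (Fin n) ℂ) (v : V) :
    star (eTensor a v) = eTensor aᴴ (star v) := by
  ext i j
  simp [eTensor, star_smul, conjTranspose_apply]

open ComplexStarModule in
lemma realPart_eTensor (a : Matrix (Fin n) (Fin n) ℂ) (v : V) :
    (ℜ (eTensor a v) : Matrix (Fin n) (Fin n) V) =
      eTensor (ℜ a : Matrix (Fin n) (Fin n) ℂ) (ℜ v : V) -
        eTensor (ℑ a : Matrix (Fin n) (Fin n) ℂ) (ℑ v : V) := by
  simp only [realPart_apply_coe, imaginaryPart_apply_coe, star_eTensor]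
  ext i j
  simp only [eTensor, of_apply, Matrix.sub_apply, Matrix.add_apply, Matrix.smul_apply,
    conjTranspose_apply, star_apply]
  match_scalars <;> simp only [Complex.real_smul, smul_eq_mul, Complex.ofReal_inv,
    Complex.ofReal_ofNat] <;> ring_nf <;> rw [Complex.I_sq] <;> ring

end ElementaryTensor

section Cmin

variable {V : Type*} [AddCommGroup V] [Module ℂ V] {pos : Set V} {n : ℕ}

lemma mem_Cmin_iff {M : Matrix (Fin n) (Fin n) V} :
    M ∈ Cmin pos n ↔ ∀ x, M.sesqForm x x ∈ pos := Iff.rfl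

lemma zero_mem_Cmin (h0 : (0 : V) ∈ pos) : (0 : Matrix (Fin n) (Fin n) V) ∈ Cmin pos n :=
  mem_Cmin_iff.mpr fun x => by
    simpa only [sesqForm_apply, Matrix.zero_apply, smul_zero, Finset.sum_const_zero] using h0

lemma add_mem_Cmin (hadd : ∀ v ∈ pos, ∀ w ∈ pos, v + w ∈ pos) {M N : Matrix (Fin n) (Fin n) V}
    (hM : M ∈ Cmin pos n) (hN : N ∈ Cmin pos n) : M + N ∈ Cmin pos n :=
  mem_Cmin_iff.mpr fun x => by
    simpa only [sesqForm_add, LinearMap.add_apply] using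
      hadd _ (mem_Cmin_iff.mp hM x) _ (mem_Cmin_iff.mp hN x)

lemma eTensor_mem_Cmin (hsmul : ∀ r : ℝ, 0 ≤ r → ∀ v ∈ pos, (r : ℂ) • v ∈ pos)
    {a : Matrix (Fin n) (Fin n) ℂ} (ha : a.PosSemidef) {v : V} (hv : v ∈ pos) :
    eTensor a v ∈ Cmin pos n :=
  mem_Cmin_iff.mpr fun x => by
    have hx := ha.dotProduct_mulVec_nonneg x
    rw [sesqForm_eTensor, Complex.eq_re_of_ofReal_le (r := 0) (z := star x ⬝ᵥ a *ᵥ x)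
      (by rwa [Complex.ofReal_zero])]
    exact hsmul _ (Complex.nonneg_iff.mp hx).1 v hv

lemma eq_zero_of_mem_Cmin_of_neg_mem (hproper : ∀ v ∈ pos, -v ∈ pos → v = 0)
    {M : Matrix (Fin n) (Fin n) V} (hM : M ∈ Cmin pos n) (hM' : -M ∈ Cmin pos n) : M = 0 := by
  refine eq_zero_of_sesqForm_eq_zero
    (LinearMap.eq_zero_of_forall_apply_self_eq_zero _ fun x => ?_)
  refine hproper _ (mem_Cmin_iff.mp hM x) ?_
  simpa only [sesqForm_neg, LinearMap.neg_apply] using mem_Cmin_iff.mp hM' x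

end Cmin

section Dmax

variable {V : Type*} [AddCommGroup V] [Module ℂ V] {pos : Set V} {n : ℕ}

lemma zero_mem_Dmax : (0 : Matrix (Fin n) (Fin n) V) ∈ Dmax pos n :=
  ⟨0, finZeroElim, finZeroElim, finZeroElim, finZeroElim, by simp⟩

lemma eTensor_mem_Dmax {a : Matrix (Fin n) (Fin n) ℂ} (ha : a.PosSemidef) {v : V}
    (hv : v ∈ pos) : eTensor a v ∈ Dmax pos n :=
  ⟨1, fun _ => a, fun _ => v, fun _ => ha, fun _ => hv, by simp⟩

lemma add_mem_Dmax {M N : Matrix (Fin n) (Fin n) V} (hM : M ∈ Dmax pos n)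
    (hN : N ∈ Dmax pos n) : M + N ∈ Dmax pos n := by
  obtain ⟨k, a, v, ha, hv, rfl⟩ := hM
  obtain ⟨l, b, w, hb, hw, rfl⟩ := hN
  refine ⟨k + l, Fin.append a b, Fin.append v w, fun i => ?_, fun i => ?_, ?_⟩
  · exact Fin.addCases (fun i => by simp [ha]) (fun i => by simp [hb]) i
  · exact Fin.addCases (fun i => by simp [hv]) (fun i => by simp [hw]) i
  · simp [Fin.sum_univ_add]

@[elab_as_elim]
lemma Dmax_induction {P : Matrix (Fin n) (Fin n) V → Prop} (zero : P 0)
    (add : ∀ M N, P M → P N → P (M + N))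
    (eTensor : ∀ a v, a.PosSemidef → v ∈ pos → P (eTensor a v))
    {M : Matrix (Fin n) (Fin n) V} (hM : M ∈ Dmax pos n) : P M := by
  obtain ⟨k, a, v, ha, hv, rfl⟩ := hM
  exact Finset.sum_induction _ P add zero fun i _ => eTensor _ _ (ha i) (hv i)

lemma smul_mem_Dmax (hsmul : ∀ r : ℝ, 0 ≤ r → ∀ v ∈ pos, (r : ℂ) • v ∈ pos) {r : ℝ}
    (hr : 0 ≤ r) {M : Matrix (Fin n) (Fin n) V} (hM : M ∈ Dmax pos n) :
    (r : ℂ) • M ∈ Dmax pos n :=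
  Dmax_induction (by simpa using zero_mem_Dmax)
    (fun _ _ hM hN => by simpa [smul_add] using add_mem_Dmax hM hN)
    (fun _ _ ha hv => by rw [smul_eTensor]; exact eTensor_mem_Dmax ha (hsmul r hr _ hv)) hM

lemma mconj_mem_Dmax {m : ℕ} (X : Matrix (Fin n) (Fin m) ℂ) {M : Matrix (Fin n) (Fin n) V}
    (hM : M ∈ Dmax pos n) : mconj X M ∈ Dmax pos m :=
  Dmax_induction (by simpa [mconj_zero] using zero_mem_Dmax)
    (fun _ _ hM hN => by simpa [mconj_add] using add_mem_Dmax hM hN)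
    (fun _ _ ha hv => by
      simpa [mconj_eTensor] using eTensor_mem_Dmax (ha.conjTranspose_mul_mul_same X) hv) hM

lemma Dmax_subset_Cmin (h0 : (0 : V) ∈ pos) (hadd : ∀ v ∈ pos, ∀ w ∈ pos, v + w ∈ pos)
    (hsmul : ∀ r : ℝ, 0 ≤ r → ∀ v ∈ pos, (r : ℂ) • v ∈ pos) : Dmax pos n ⊆ Cmin pos n :=
  fun _ => Dmax_induction (zero_mem_Cmin h0) (fun _ _ => add_mem_Cmin hadd)
    (fun _ _ ha hv => eTensor_mem_Cmin hsmul ha hv)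

lemma star_eq_self_of_mem_Dmax [StarAddMonoid V] [StarModule ℂ V]
    (hstar : ∀ v ∈ pos, star v = v) {M : Matrix (Fin n) (Fin n) V} (hM : M ∈ Dmax pos n) :
    star M = M :=
  Dmax_induction (star_zero _) (fun _ _ hM hN => by rw [star_add, hM, hN])
    (fun _ _ ha hv => by rw [star_eTensor, ha.1.eq, hstar _ hv]) hM

end Dmax

section OrderUnit

variable {V : Type*} [AddCommGroup V] [Module ℂ V] {pos : Set V} {e : V} {n : ℕ}

lemma eMat_mem_Dmax (he : e ∈ pos) : eMat e n ∈ Dmax pos n :=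
  eTensor_one e ▸ eTensor_mem_Dmax PosSemidef.one he

lemma smul_eMat_sub_eTensor_mem_Dmax (hsmul : ∀ r : ℝ, 0 ≤ r → ∀ v ∈ pos, (r : ℂ) • v ∈ pos)
    {a : Matrix (Fin n) (Fin n) ℂ} {t : ℝ} (ha₁ : ((t : ℂ) • 1 - a).PosSemidef)
    (ha₂ : ((t : ℂ) • 1 + a).PosSemidef) {v : V} {s : ℝ} (hv₁ : (s : ℂ) • e - v ∈ pos)
    (hv₂ : (s : ℂ) • e + v ∈ pos) :
    ((t * s : ℝ) : ℂ) • eMat e n - eTensor a v ∈ Dmax pos n := by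
  have key : ((t * s : ℝ) : ℂ) • eMat e n - eTensor a v = ((2⁻¹ : ℝ) : ℂ) •
      (eTensor ((t : ℂ) • 1 + a) ((s : ℂ) • e - v) +
        eTensor ((t : ℂ) • 1 - a) ((s : ℂ) • e + v)) := by
    ext i j
    simp only [eTensor, eMat, of_apply, Matrix.sub_apply, Matrix.add_apply, Matrix.smul_apply,
      one_apply]
    split_ifs <;> push_cast <;> module
  rw [key]
  exact smul_mem_Dmax hsmul (by norm_num)
    (add_mem_Dmax (eTensor_mem_Dmax ha₂ hv₁) (eTensor_mem_Dmax ha₁ hv₂))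

variable [StarAddMonoid V]

lemma mem_of_forall_exists_smul_sub_mem
    (hsmul : ∀ r : ℝ, 0 ≤ r → ∀ v ∈ pos, (r : ℂ) • v ∈ pos)
    (hunit : ∀ v : V, star v = v → ∃ r : ℝ, 0 < r ∧ (r : ℂ) • e - v ∈ pos) : e ∈ pos := by
  obtain ⟨r, hr, hre⟩ := hunit 0 (star_zero V)
  have hre' := hsmul r⁻¹ (inv_nonneg.mpr hr.le) _ (sub_zero ((r : ℂ) • e) ▸ hre)
  rwa [smul_smul, ← Complex.ofReal_mul, inv_mul_cancel₀ hr.ne', Complex.ofReal_one, one_smul]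
    at hre'

lemma exists_smul_sub_mem_and_smul_add_mem (hadd : ∀ v ∈ pos, ∀ w ∈ pos, v + w ∈ pos)
    (hsmul : ∀ r : ℝ, 0 ≤ r → ∀ v ∈ pos, (r : ℂ) • v ∈ pos)
    (hunit : ∀ v : V, star v = v → ∃ r : ℝ, 0 < r ∧ (r : ℂ) • e - v ∈ pos)
    {v : V} (hv : star v = v) : ∃ s : ℝ, (s : ℂ) • e - v ∈ pos ∧ (s : ℂ) • e + v ∈ pos := by
  have he := mem_of_forall_exists_smul_sub_mem hsmul hunit
  obtain ⟨s₁, -, h₁⟩ := hunit v hv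
  obtain ⟨s₂, -, h₂⟩ := hunit (-v) (by rw [star_neg, hv])
  refine ⟨max s₁ s₂, smul_sub_mem_of_le hadd hsmul he (le_max_left _ _) h₁, ?_⟩
  simpa using smul_sub_mem_of_le hadd hsmul he (le_max_right _ _) h₂

variable (pos e n) in
def dominatedByUnit : AddSubmonoid (Matrix (Fin n) (Fin n) V) where
  carrier := {M | ∃ r : ℝ, (r : ℂ) • eMat e n - M ∈ Dmax pos n}
  zero_mem' := ⟨0, by simpa using zero_mem_Dmax⟩
  add_mem' := by
    rintro M N ⟨r, hM⟩ ⟨r', hN⟩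
    refine ⟨r + r', ?_⟩
    have key : ((r + r' : ℝ) : ℂ) • eMat e n - (M + N) =
        ((r : ℂ) • eMat e n - M) + ((r' : ℂ) • eMat e n - N) := by
      push_cast
      module
    exact key ▸ add_mem_Dmax hM hN

lemma eTensor_mem_dominatedByUnit (hadd : ∀ v ∈ pos, ∀ w ∈ pos, v + w ∈ pos)
    (hsmul : ∀ r : ℝ, 0 ≤ r → ∀ v ∈ pos, (r : ℂ) • v ∈ pos)
    (hunit : ∀ v : V, star v = v → ∃ r : ℝ, 0 < r ∧ (r : ℂ) • e - v ∈ pos)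
    {a : Matrix (Fin n) (Fin n) ℂ} (ha : IsSelfAdjoint a) {v : V} (hv : IsSelfAdjoint v) :
    eTensor a v ∈ dominatedByUnit pos e n := by
  obtain ⟨t, ha₁, ha₂⟩ := ha.exists_posSemidef_smul_one_sub_and_add
  obtain ⟨s, hv₁, hv₂⟩ := exists_smul_sub_mem_and_smul_add_mem hadd hsmul hunit hv.star_eq
  exact ⟨t * s, smul_eMat_sub_eTensor_mem_Dmax hsmul ha₁ ha₂ hv₁ hv₂⟩

variable [StarModule ℂ V]

open ComplexStarModule in
lemma realPart_mem_dominatedByUnit (hadd : ∀ v ∈ pos, ∀ w ∈ pos, v + w ∈ pos)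
    (hsmul : ∀ r : ℝ, 0 ≤ r → ∀ v ∈ pos, (r : ℂ) • v ∈ pos)
    (hunit : ∀ v : V, star v = v → ∃ r : ℝ, 0 < r ∧ (r : ℂ) • e - v ∈ pos)
    (M : Matrix (Fin n) (Fin n) V) :
    (ℜ M : Matrix (Fin n) (Fin n) V) ∈ dominatedByUnit pos e n := by
  rw [matrix_eq_sum_single M]
  simp only [map_sum, AddSubmonoidClass.coe_finsetSum]
  refine sum_mem fun i _ => sum_mem fun j _ => ?_
  rw [← eTensor_single_one, realPart_eTensor, sub_eq_add_neg, neg_eTensor]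
  exact add_mem (eTensor_mem_dominatedByUnit hadd hsmul hunit (ℜ _).2 (ℜ _).2)
    (eTensor_mem_dominatedByUnit hadd hsmul hunit (ℑ _).2.neg (ℑ _).2)

lemma exists_pos_smul_eMat_sub_mem_Dmax (hadd : ∀ v ∈ pos, ∀ w ∈ pos, v + w ∈ pos)
    (hsmul : ∀ r : ℝ, 0 ≤ r → ∀ v ∈ pos, (r : ℂ) • v ∈ pos)
    (hunit : ∀ v : V, star v = v → ∃ r : ℝ, 0 < r ∧ (r : ℂ) • e - v ∈ pos)
    {M : Matrix (Fin n) (Fin n) V} (hM : star M = M) :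
    ∃ r : ℝ, 0 < r ∧ (r : ℂ) • eMat e n - M ∈ Dmax pos n := by
  obtain ⟨r, hr⟩ := IsSelfAdjoint.coe_realPart (x := M) hM ▸
    realPart_mem_dominatedByUnit hadd hsmul hunit M
  refine ⟨max r 1, by positivity, smul_sub_mem_of_le (fun _ hM _ hN => add_mem_Dmax hM hN)
    (fun _ hr _ => smul_mem_Dmax hsmul hr) ?_ (le_max_left r 1) hr⟩
  exact eMat_mem_Dmax (mem_of_forall_exists_smul_sub_mem hsmul hunit)

end OrderUnit

/-- For an AOU space `(V, V⁺, e)`, the family `D^max(V)` is a matrix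
ordering on `V` and `e` is a matrix order unit for it. -/
theorem Dmax_isMatrixOrdering_and_orderUnit
    {V : Type*} [AddCommGroup V] [Module ℂ V] [StarAddMonoid V] [StarModule ℂ V]
    (pos : Set V) (e : V) (hA : IsAOU pos e) :
    IsMatrixOrdering (Dmax pos) ∧ IsMatrixOrderUnit (Dmax pos) e := by
  obtain ⟨⟨hstar, hsmul, hadd, hproper⟩, he_star, hunit, -⟩ := hA
  have h0 : (0 : V) ∈ pos := by
    simpa using hsmul 0 le_rfl e (mem_of_forall_exists_smul_sub_mem hsmul hunit)
  have hproper_Dmax : ∀ n, ∀ M ∈ Dmax pos n, -M ∈ Dmax pos n → M = 0 := fun _ _ hM hM' =>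
    eq_zero_of_mem_Cmin_of_neg_mem hproper (Dmax_subset_Cmin h0 hadd hsmul hM)
      (Dmax_subset_Cmin h0 hadd hsmul hM')
  exact ⟨⟨fun _ _ => star_eq_self_of_mem_Dmax hstar, fun _ _ hr _ => smul_mem_Dmax hsmul hr,
      fun _ _ hM _ hN => add_mem_Dmax hM hN, hproper_Dmax, fun _ _ X _ => mconj_mem_Dmax X⟩,
    he_star, fun _ _ => exists_pos_smul_eMat_sub_mem_Dmax hadd hsmul hunit⟩
end

section
/- Let V = C([0,1]) with its usual positive cone and order unit 1, and let P(t) = [[1, e^{2πit}],[e^{-2πit}, 1]] ∈ M_2(V)_h. Then P ∉ D_2^max(V); i.e., P cannot be written as a finite sum ∑_j Q_j ⊗ p_j with Q_j ∈ M_2^+ and p_j ∈ C([0,1])^+. -/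
open scoped ComplexOrder
open Finset

/-- The positive cone of `C([0,1])`. -/
def posC01 : Set C(Set.Icc (0:ℝ) 1, ℂ) := {f | ∀ t, 0 ≤ f t}

/-- The function `t ↦ e^{2πit}` in `C([0,1])`. -/
noncomputable def expMap : C(Set.Icc (0:ℝ) 1, ℂ) :=
  ⟨fun t => Complex.exp (2 * Real.pi * Complex.I * ((t : ℝ) : ℂ)), by fun_prop⟩

/-- The matrix `P(t) = [[1, e^{2πit}], [e^{-2πit}, 1]] ∈ M_2(C([0,1]))`. -/
noncomputable def Pmat : Matrix (Fin 2) (Fin 2) C(Set.Icc (0:ℝ) 1, ℂ) :=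
  !![1, expMap; star expMap, 1]

/-!
If `P = ∑ Q_j ⊗ p_j` with `Q_j = [[a_j, b_j], [conj b_j, c_j]] ≥ 0` and `p_j ≥ 0`, then at every
`t` the chain `1 = |∑ b_j p_j(t)| ≤ ∑ |b_j| p_j(t) ≤ ∑ (a_j + c_j) / 2 · p_j(t) = 1` is an equality,
and the equality case of the triangle inequality forces `e^{2πit} = b_j / |b_j|` for some `j`.
So the continuous function `t ↦ e^{2πit}` takes finitely many values on the connected interval
`[0,1]` and must be constant, yet it is `1` at `t = 0` and `-1` at `t = 1/2`.
-/

open Matrix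

theorem Matrix.PosSemidef.two_mul_norm_apply_le {n : Type*} [Fintype n] {A : Matrix n n ℂ}
    (hA : A.PosSemidef) (j k : n) : 2 * (‖A j k‖ : ℂ) ≤ A j j + A k k := by
  set b := A j k
  rcases eq_or_ne b 0 with hb | hb
  · simpa [hb] using add_nonneg (hA.diag_nonneg (i := j)) (hA.diag_nonneg (i := k))
  have hconj : A k j = starRingEnd ℂ b := (hA.1.apply k j).symm
  have hnormSq : starRingEnd ℂ b * b = (‖b‖ : ℂ) ^ 2 := Complex.conj_mul' b
  have hform : star ![b, -(‖b‖ : ℂ)] ⬝ᵥ (A.submatrix ![j, k] ![j, k] *ᵥ ![b, -(‖b‖ : ℂ)]) =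
      (‖b‖ : ℂ) ^ 2 * (A j j + A k k - 2 * ‖b‖) := by
    simp only [dotProduct, mulVec, Fin.sum_univ_two, Pi.star_apply, RCLike.star_def,
      submatrix_apply, cons_val_zero, cons_val_one, mul_neg, neg_mul, map_neg,
      Complex.conj_ofReal, hconj]
    linear_combination (A j j - 2 * ‖b‖) * hnormSq
  have hnonneg := (hA.submatrix ![j, k]).dotProduct_mulVec_nonneg ![b, -(‖b‖ : ℂ)]
  rw [hform] at hnonneg
  have hpos : (0 : ℂ) < (‖b‖ : ℂ) ^ 2 := by exact_mod_cast pow_pos (norm_pos_iff.mpr hb) 2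
  have := mul_nonneg (inv_nonneg.mpr hpos.le) hnonneg
  rwa [inv_mul_cancel_left₀ hpos.ne', sub_nonneg] at this

theorem Complex.exists_div_norm_eq_of_sum_norm_le {ι : Type*} (s : Finset ι) (z : ι → ℂ)
    (hS : ∑ i ∈ s, z i ≠ 0) (hle : ∑ i ∈ s, ‖z i‖ ≤ ‖∑ i ∈ s, z i‖) :
    ∃ i ∈ s, z i / ‖z i‖ = (∑ i ∈ s, z i) / ‖∑ i ∈ s, z i‖ := by
  set S := ∑ i ∈ s, z i
  set w := S / ‖S‖
  have hS' : (‖S‖ : ℂ) ≠ 0 := by exact_mod_cast norm_ne_zero_iff.mpr hS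
  have hw : ‖w‖ = 1 := by simp [w, hS]
  have hwS : starRingEnd ℂ w * S = ‖S‖ := by
    rw [map_div₀, Complex.conj_ofReal, div_mul_eq_mul_div, Complex.conj_mul', sq,
      mul_div_assoc, div_self hS', mul_one]
  have hre_le : ∀ i ∈ s, (starRingEnd ℂ w * z i).re ≤ ‖z i‖ := fun i _ => by
    simpa [hw] using Complex.re_le_norm (starRingEnd ℂ w * z i)
  have hsum : ∑ i ∈ s, (starRingEnd ℂ w * z i).re = ∑ i ∈ s, ‖z i‖ := by
    refine le_antisymm (Finset.sum_le_sum hre_le) (hle.trans_eq ?_)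
    rw [← Complex.re_sum, ← Finset.mul_sum, hwS, Complex.ofReal_re]
  obtain ⟨i, hi, hzi⟩ := Finset.exists_ne_zero_of_sum_ne_zero hS
  refine ⟨i, hi, ?_⟩
  have hnonneg : 0 ≤ starRingEnd ℂ w * z i := by
    rw [← Complex.re_eq_norm, ((Finset.sum_eq_sum_iff_of_le hre_le).mp hsum) i hi]
    simp [hw]
  have hzi' : (‖z i‖ : ℂ) ≠ 0 := by exact_mod_cast norm_ne_zero_iff.mpr hzi
  have hnorm : (‖z i‖ : ℂ) = starRingEnd ℂ w * z i := by
    rw [← Complex.norm_of_nonneg' hnonneg, norm_mul, Complex.norm_conj, hw, one_mul]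
  have hwconj : w * starRingEnd ℂ w = 1 := by
    rw [Complex.mul_conj', hw, Complex.ofReal_one, one_pow]
  rw [div_eq_iff hzi', hnorm]
  linear_combination (-z i) * hwconj

theorem exists_div_norm_eq_of_sum_posSemidef {ι n : Type*} [Fintype n] (s : Finset ι)
    (A : ι → Matrix n n ℂ) (p : ι → ℂ) (hA : ∀ i, (A i).PosSemidef) (hp : ∀ i, 0 ≤ p i)
    (j k : n) (hjj : ∑ i ∈ s, A i j j * p i = 1) (hkk : ∑ i ∈ s, A i k k * p i = 1)
    (hjk : ‖∑ i ∈ s, A i j k * p i‖ = 1) :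
    ∃ i ∈ s, A i j k / ‖A i j k‖ = ∑ i ∈ s, A i j k * p i := by
  have hnorm : ∀ i, (‖A i j k * p i‖ : ℂ) = ‖A i j k‖ * p i := fun i => by
    rw [norm_mul, Complex.ofReal_mul, Complex.norm_of_nonneg' (hp i)]
  have hle : ∑ i ∈ s, ‖A i j k * p i‖ ≤ ‖∑ i ∈ s, A i j k * p i‖ := by
    rw [hjk, ← Complex.real_le_real, Complex.ofReal_sum, Complex.ofReal_one]
    calc ∑ i ∈ s, (‖A i j k * p i‖ : ℂ)
        ≤ ∑ i ∈ s, (A i j j + A i k k) / 2 * p i := by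
          refine Finset.sum_le_sum fun i _ => ?_
          rw [hnorm]
          exact mul_le_mul_of_nonneg_right
            ((le_div_iff₀' two_pos).mpr ((hA i).two_mul_norm_apply_le j k)) (hp i)
      _ = 1 := by
          simp only [div_mul_eq_mul_div, add_mul, ← Finset.sum_div, Finset.sum_add_distrib,
            hjj, hkk]
          norm_num
  have hS : ∑ i ∈ s, A i j k * p i ≠ 0 := norm_ne_zero_iff.mp (hjk ▸ one_ne_zero)
  obtain ⟨i, hi, hdir⟩ := Complex.exists_div_norm_eq_of_sum_norm_le s _ hS hle
  refine ⟨i, hi, ?_⟩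
  rw [hjk, Complex.ofReal_one, div_one] at hdir
  rcases eq_or_ne (p i) 0 with hpi | hpi
  · rw [hpi, mul_zero, zero_div] at hdir
    exact absurd hdir.symm hS
  · rwa [hnorm, mul_div_mul_right _ _ hpi] at hdir

theorem sum_eTensor_apply {V ι : Type*} [AddCommGroup V] [Module ℂ V] {n : ℕ} (s : Finset ι)
    (a : ι → Matrix (Fin n) (Fin n) ℂ) (v : ι → V) (p q : Fin n) :
    (∑ i ∈ s, eTensor (a i) (v i)) p q = ∑ i ∈ s, a i p q • v i := by
  simp [eTensor, Matrix.sum_apply]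

theorem ContinuousMap.apply_eq_of_forall_mem_finite {X Y : Type*} [TopologicalSpace X]
    [PreconnectedSpace X] [TopologicalSpace Y] [T1Space Y] (f : C(X, Y)) {T : Set Y}
    (hT : T.Finite) (hf : ∀ x, f x ∈ T) (x y : X) : f x = f y :=
  isPreconnected_univ.constant_of_mapsTo hT.isDiscrete f.continuous.continuousOn
    (fun x _ => hf x) (Set.mem_univ x) (Set.mem_univ y)

theorem norm_expMap (t : Set.Icc (0 : ℝ) 1) : ‖expMap t‖ = 1 := by
  simp [expMap, Complex.norm_exp]

theorem expMap_zero_ne_expMap_half :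
    expMap ⟨0, by norm_num⟩ ≠ expMap ⟨1 / 2, by norm_num⟩ := by
  have h : 2 * (Real.pi : ℂ) * Complex.I * ((1 / 2 : ℝ) : ℂ) = Real.pi * Complex.I := by
    push_cast; ring
  simp only [expMap, ContinuousMap.coe_mk, h, Complex.exp_pi_mul_I]
  norm_num

/-- `P ∉ D_2^max(C([0,1]))`: `P` is not a finite sum
`∑ Q_j ⊗ p_j` with `Q_j ∈ M_2⁺` and `p_j ≥ 0`. -/
theorem Pmat_not_mem_Dmax : Pmat ∉ Dmax posC01 2 := by
  rintro ⟨k, a, v, ha, hv, hP⟩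
  have hPt : ∀ p q t, Pmat p q t = ∑ i, a i p q * v i t := fun p q t => by
    simp [hP, sum_eTensor_apply]
  have hmem : ∀ t, expMap t ∈ Set.range fun i => a i 0 1 / ‖a i 0 1‖ := fun t => by
    obtain ⟨i, -, hi⟩ := exists_div_norm_eq_of_sum_posSemidef Finset.univ a (fun i => v i t) ha
      (fun i => hv i t) 0 1 (by simpa [Pmat] using (hPt 0 0 t).symm)
      (by simpa [Pmat] using (hPt 1 1 t).symm)
      (by simpa [Pmat, ← hPt] using norm_expMap t)
    exact ⟨i, hi.trans (by simpa [Pmat] using (hPt 0 1 t).symm)⟩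
  exact expMap_zero_ne_expMap_half
    (expMap.apply_eq_of_forall_mem_finite (Set.finite_range _) hmem _ _)
end

section
/- Let (V,{C_n},e) be a matrix ordered *-vector space with matrix order unit e, and let N = ∩{ker f : f a state on V} and N_n = ∩{ker f : f a state on M_n(V)}. Then N_n = M_n(N) for every n. -/
/-!
Positive functionals can be moved between the levels by compressions: a state `s` on `V` and
`y ∈ ℂⁿ` give the positive functional `M ↦ s(y* M y)` on `M_n(V)`, and a positive functional `f`
on `M_n(V)` and `x ∈ ℂⁿ` give the positive functional `v ↦ f(x* x ⊗ v)` on `V`. Because of the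
order unit, a positive functional is either a positive multiple of a state or vanishes on all
selfadjoint elements, hence everywhere; either way it kills the common kernel of the states.
Polarization recovers `s(A_ij)`, resp. `f(E_ij ⊗ v)`, from these quadratic expressions.
-/

open scoped ComplexOrder
open Finset

theorem Matrix.eq_zero_of_forall_sum_star_mul_mul_eq_zero {ι : Type*} [Fintype ι] [DecidableEq ι]
    (g : Matrix ι ι ℂ) (h : ∀ x : ι → ℂ, ∑ k, ∑ l, star (x k) * x l * g k l = 0) : g = 0 := by
  suffices Matrix.toEuclideanLin g = 0 from Matrix.toEuclideanLin.map_eq_zero_iff.mp this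
  refine (inner_map_self_eq_zero _).mp fun x => ?_
  rw [← inner_conj_symm, EuclideanSpace.inner_eq_star_dotProduct, map_eq_zero, ← h x.ofLp,
    dotProduct_comm]
  simp only [dotProduct, Pi.star_apply, ofLp_toLpLin, toLin'_apply, mulVec, Finset.mul_sum]
  exact Finset.sum_congr rfl fun k _ => Finset.sum_congr rfl fun l _ => by ring

open ComplexStarModule in
theorem IsPosFunc.apply_eq_zero_of_forall_isState
    {W : Type*} [AddCommGroup W] [Module ℂ W] [StarAddMonoid W] [StarModule ℂ W]
    {P : Set W} {u : W} (hu : ∀ w : W, star w = w → ∃ r : ℝ, 0 < r ∧ (r : ℂ) • u - w ∈ P)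
    {t : W →ₗ[ℂ] ℂ} (ht : IsPosFunc P t) {v : W} (hv : ∀ s, IsState P u s → s v = 0) :
    t v = 0 := by
  have hbound (w : W) (hw : star w = w) : ∃ r : ℝ, 0 < r ∧ t w ≤ r * t u := by
    obtain ⟨r, hr, hmem⟩ := hu w hw
    refine ⟨r, hr, ?_⟩
    simpa [sub_nonneg] using ht _ hmem
  have htu : 0 ≤ t u := by
    obtain ⟨r, hr, h⟩ := hbound 0 (star_zero _)
    have hr' : (r : ℂ) ≠ 0 := by exact_mod_cast hr.ne'
    rw [map_zero] at h
    simpa [hr'] using mul_nonneg (inv_nonneg.mpr (Complex.zero_le_real.mpr hr.le)) h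
  rcases htu.eq_or_lt with htu | htu
  · have hself (w : W) (hw : star w = w) : t w = 0 := by
      obtain ⟨r, -, h₁⟩ := hbound w hw
      obtain ⟨r', -, h₂⟩ := hbound (-w) (by rw [star_neg, hw])
      rw [← htu, mul_zero] at h₁ h₂
      rw [map_neg, neg_nonpos] at h₂
      exact le_antisymm h₁ h₂
    rw [← realPart_add_I_smul_imaginaryPart v, map_add, map_smul, hself _ (ℜ v).prop,
      hself _ (ℑ v).prop, smul_zero, add_zero]
  · have hs : IsState P u ((t u)⁻¹ • t) := by
      refine ⟨by simp [htu.ne'], fun p hp => ?_⟩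
      simpa using mul_nonneg (inv_nonneg.mpr htu.le) (ht p hp)
    simpa [htu.ne'] using hv _ hs

section MatrixOrdering

open Matrix

variable {V : Type*} [AddCommGroup V] [Module ℂ V] {n : ℕ}

theorem sum_eTensor_single (A : Matrix (Fin n) (Fin n) V) :
    ∑ k, ∑ l, eTensor (single k l 1) (A k l) = A := by
  ext p q
  simp [eTensor, Matrix.sum_apply, single_apply, ite_smul, ite_and]

variable (V) in
def eTensorBilin : Matrix (Fin n) (Fin n) ℂ →ₗ[ℂ] V →ₗ[ℂ] Matrix (Fin n) (Fin n) V :=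
  LinearMap.mk₂ ℂ eTensor
    (fun a b v => by ext; simp [eTensor, add_smul])
    (fun c a v => by ext; simp [eTensor, smul_smul])
    (fun a v w => by ext; simp [eTensor, smul_add])
    (fun c a v => by ext; simp [eTensor, smul_comm c])

@[simp]
theorem eTensorBilin_apply (a : Matrix (Fin n) (Fin n) ℂ) (v : V) :
    eTensorBilin V a v = eTensor a v :=
  rfl

def vecCompress (y : Fin n → ℂ) : Matrix (Fin n) (Fin n) V →ₗ[ℂ] V where
  toFun M := ∑ k, ∑ l, (star (y k) * y l) • M k l
  map_add' M N := by simp [smul_add, Finset.sum_add_distrib]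
  map_smul' c M := by simp [Finset.smul_sum, smul_comm c]

theorem of_vecCompress (y : Fin n → ℂ) (M : Matrix (Fin n) (Fin n) V) :
    (of fun _ _ : Fin 1 => vecCompress y M) = mconj (replicateCol (Fin 1) y) M := by
  ext
  simp [mconj, vecCompress]

variable [StarAddMonoid V] {C : ∀ n : ℕ, Set (Matrix (Fin n) (Fin n) V)} {e : V}

theorem vecCompress_mem_groundPos (hC : IsMatrixOrdering C) (y : Fin n → ℂ)
    {M : Matrix (Fin n) (Fin n) V} (hM : M ∈ C n) : vecCompress y M ∈ groundPos C := by
  change (of fun _ _ : Fin 1 => vecCompress y M) ∈ C 1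
  rw [of_vecCompress]
  exact hC.2.2.2.2 n 1 _ M hM

theorem eTensor_vecMulVec_mem (hC : IsMatrixOrdering C) (x : Fin n → ℂ) {v : V}
    (hv : v ∈ groundPos C) : eTensor (vecMulVec (star x) x) v ∈ C n := by
  have : eTensor (vecMulVec (star x) x) v = mconj (replicateRow (Fin 1) x) (of fun _ _ => v) := by
    ext
    simp [eTensor, mconj, vecMulVec]
  rw [this]
  exact hC.2.2.2.2 1 n _ _ hv

theorem exists_sub_mem_groundPos (hU : IsMatrixOrderUnit C e) {w : V} (hw : star w = w) :
    ∃ r : ℝ, 0 < r ∧ (r : ℂ) • e - w ∈ groundPos C := by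
  obtain ⟨r, hr, hmem⟩ := hU.2 1 (of fun _ _ => w) (by ext; simp [hw])
  refine ⟨r, hr, ?_⟩
  change (of fun _ _ : Fin 1 => (r : ℂ) • e - w) ∈ C 1
  convert hmem using 1
  ext i j
  simp [eMat, Subsingleton.elim i j]

variable [StarModule ℂ V]

theorem IsPosFunc.apply_eTensor_eq_zero (hC : IsMatrixOrdering C) (hU : IsMatrixOrderUnit C e)
    {f : Matrix (Fin n) (Fin n) V →ₗ[ℂ] ℂ} (hf : IsPosFunc (C n) f) {v : V}
    (hv : ∀ s, IsState (groundPos C) e s → s v = 0) (a : Matrix (Fin n) (Fin n) ℂ) :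
    f (eTensor a v) = 0 := by
  set φ := f ∘ₗ (eTensorBilin V).flip v
  have hrank (x : Fin n → ℂ) : φ (vecMulVec (star x) x) = 0 :=
    IsPosFunc.apply_eq_zero_of_forall_isState (t := f ∘ₗ eTensorBilin V (vecMulVec (star x) x))
      (fun _ => exists_sub_mem_groundPos hU) (fun w hw => hf _ (eTensor_vecMulVec_mem hC x hw)) hv
  have hsingle (k l : Fin n) (c : ℂ) : φ (single k l c) = c * φ (single k l 1) := by
    rw [← smul_eq_mul, ← map_smul, smul_single, smul_eq_mul, mul_one]
  have hbasis : (of fun k l => φ (single k l 1)) = 0 := by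
    refine eq_zero_of_forall_sum_star_mul_mul_eq_zero _ fun x => ?_
    rw [← hrank x, matrix_eq_sum_single (vecMulVec (star x) x), map_sum]
    refine Finset.sum_congr rfl fun k _ => ?_
    rw [map_sum]
    refine Finset.sum_congr rfl fun l _ => ?_
    rw [hsingle, vecMulVec_apply, of_apply, Pi.star_apply]
  have hφ : φ = 0 := ext_linearMap ℂ fun k l => LinearMap.ext_ring (by
    simpa using congrFun (congrFun hbasis k) l)
  exact LinearMap.congr_fun hφ a

end MatrixOrdering

/-- For a matrix ordered `*`-vector space with matrix order unit,
the null space of the states on `M_n(V)` is `M_n(N)` where `N` is the null space of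
the states on `V`. -/
theorem matrix_state_nullspace
    {V : Type*} [AddCommGroup V] [Module ℂ V] [StarAddMonoid V] [StarModule ℂ V]
    (C : ∀ n : ℕ, Set (Matrix (Fin n) (Fin n) V)) (e : V)
    (hC : IsMatrixOrdering C) (hU : IsMatrixOrderUnit C e) (n : ℕ)
    (A : Matrix (Fin n) (Fin n) V) :
    (∀ f : Matrix (Fin n) (Fin n) V →ₗ[ℂ] ℂ,
        f (eMat e n) = 1 → (∀ M ∈ C n, 0 ≤ f M) → f A = 0) ↔
      (∀ i j, ∀ s : V →ₗ[ℂ] ℂ, IsState (groundPos C) e s → s (A i j) = 0) := by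
  constructor
  · intro h i j s hs
    have hentries : (Matrix.of fun k l => s (A k l)) = 0 := by
      refine Matrix.eq_zero_of_forall_sum_star_mul_mul_eq_zero _ fun y => ?_
      have := IsPosFunc.apply_eq_zero_of_forall_isState (hU.2 n) (t := s ∘ₗ vecCompress y)
        (fun M hM => hs.2 _ (vecCompress_mem_groundPos hC y hM)) (fun f hf => h f hf.1 hf.2)
      simpa [vecCompress, map_sum, mul_assoc] using this
    exact congrFun (congrFun hentries i) j
  · intro h f _ hf
    rw [← sum_eTensor_single A]
    simp only [map_sum]
    exact Finset.sum_eq_zero fun k _ => Finset.sum_eq_zero fun l _ =>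
      IsPosFunc.apply_eTensor_eq_zero hC hU hf (h k l) _
end

section
/- Let {P_n} be an operator system structure on an AOU space (V,V^+,e) and let P_n^d := {f : M_n(V) → ℂ linear with f(P_n) ⊆ ℝ^+}. Then each f ∈ P_n^d, identified with the matrix (f_{ij}) where f_{ij}(v) = f(v ⊗ E_{ij}), has entries f_{ij} that are continuous linear functionals on V, and {P_n^d} is a matrix ordering on the dual space V′ with P_1^d = (V^+)^d. -/
open scoped ComplexOrder
open Finset

/-!
Every self-adjoint `M ∈ M_n(V)` is a difference of two elements of `P_n` (because `e` is a matrix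
order unit), so a functional in `P_n^d` is real on self-adjoint matrices. As these span `M_n(V)`,
this forces `f_ij = f_ji*`, and properness of `P_n^d` follows in the same way. Compatibility of
`P_n^d` follows from that of `P_n`, since under the pairing conjugation by `X` on `M_n(V')` is
adjoint to conjugation by `Xᵀ` on `M_m(V)`. For continuity: `x* F x` lies in `P_1^d = (V⁺)^d` for
every `x ∈ ℂⁿ`, a positive functional `g` satisfies `|g v| ≤ g(e) ‖v‖_m` by the order-unit axiom,
and polarization writes `F i j` as a combination of four functionals `x* F x`.
-/

section Pairing
variable {V : Type*} [AddCommGroup V] [Module ℂ V] {n : ℕ}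

theorem dPair_add_left (F G : Matrix (Fin n) (Fin n) (V →ₗ[ℂ] ℂ)) (A : Matrix (Fin n) (Fin n) V) :
    dPair (F + G) A = dPair F A + dPair G A := by
  simp [dPair, sum_add_distrib]

theorem dPair_neg_left (F : Matrix (Fin n) (Fin n) (V →ₗ[ℂ] ℂ)) (A : Matrix (Fin n) (Fin n) V) :
    dPair (-F) A = -dPair F A := by
  simp [dPair]

theorem dPair_sub_left (F G : Matrix (Fin n) (Fin n) (V →ₗ[ℂ] ℂ)) (A : Matrix (Fin n) (Fin n) V) :
    dPair (F - G) A = dPair F A - dPair G A := by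
  simp [dPair, sum_sub_distrib]

theorem dPair_smul_left (c : ℂ) (F : Matrix (Fin n) (Fin n) (V →ₗ[ℂ] ℂ))
    (A : Matrix (Fin n) (Fin n) V) : dPair (c • F) A = c * dPair F A := by
  simp [dPair, mul_sum]

theorem dPair_add_right (F : Matrix (Fin n) (Fin n) (V →ₗ[ℂ] ℂ)) (A B : Matrix (Fin n) (Fin n) V) :
    dPair F (A + B) = dPair F A + dPair F B := by
  simp [dPair, sum_add_distrib]

theorem dPair_sub_right (F : Matrix (Fin n) (Fin n) (V →ₗ[ℂ] ℂ)) (A B : Matrix (Fin n) (Fin n) V) :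
    dPair F (A - B) = dPair F A - dPair F B := by
  simp [dPair, sum_sub_distrib]

theorem dPair_smul_right (F : Matrix (Fin n) (Fin n) (V →ₗ[ℂ] ℂ)) (c : ℂ)
    (A : Matrix (Fin n) (Fin n) V) : dPair F (c • A) = c * dPair F A := by
  simp [dPair, mul_sum]

theorem dPair_single (F : Matrix (Fin n) (Fin n) (V →ₗ[ℂ] ℂ)) (i j : Fin n) (v : V) :
    dPair F (Matrix.single i j v) = F i j v := by
  simp [dPair, Matrix.single_apply, apply_ite (F _ _), ite_and]

theorem dPair_fin_one (F : Matrix (Fin 1) (Fin 1) (V →ₗ[ℂ] ℂ)) (A : Matrix (Fin 1) (Fin 1) V) :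
    dPair F A = F 0 0 (A 0 0) := by
  simp [dPair]

theorem dPair_mconj {m : ℕ} (X : Matrix (Fin n) (Fin m) ℂ) (F : Matrix (Fin n) (Fin n) (V →ₗ[ℂ] ℂ))
    (A : Matrix (Fin m) (Fin m) V) : dPair (mconj X F) A = dPair F (mconj X.transpose A) := by
  simp only [dPair, mconj, Matrix.of_apply, Matrix.transpose_apply, LinearMap.sum_apply,
    LinearMap.smul_apply, map_sum, map_smul, smul_eq_mul]
  exact (sum_congr rfl fun _ _ => sum_comm).trans <| sum_comm.trans <|
    sum_congr rfl fun _ _ => (sum_congr rfl fun _ _ => sum_comm).trans sum_comm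

variable {P : ∀ n : ℕ, Set (Matrix (Fin n) (Fin n) V)} {F : Matrix (Fin n) (Fin n) (V →ₗ[ℂ] ℂ)}

theorem smul_mem_dualCones {r : ℝ} (hr : 0 ≤ r) (hF : F ∈ dualCones P n) :
    (r : ℂ) • F ∈ dualCones P n := fun A hA => by
  rw [dPair_smul_left]
  exact mul_nonneg (Complex.zero_le_real.2 hr) (hF A hA)

theorem add_mem_dualCones {G : Matrix (Fin n) (Fin n) (V →ₗ[ℂ] ℂ)} (hF : F ∈ dualCones P n)
    (hG : G ∈ dualCones P n) : F + G ∈ dualCones P n := fun A hA => by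
  rw [dPair_add_left]
  exact add_nonneg (hF A hA) (hG A hA)

theorem mconj_mem_dualCones {m : ℕ} {X : Matrix (Fin n) (Fin m) ℂ} (hF : F ∈ dualCones P n)
    (hconj : ∀ A ∈ P m, mconj X.transpose A ∈ P n) : mconj X F ∈ dualCones P m := fun A hA => by
  rw [dPair_mconj]
  exact hF _ (hconj A hA)

theorem dualCones_one {pos : Set V} (hone : P 1 = {M | M 0 0 ∈ pos}) :
    dualCones P 1 = {F | IsPosFunc pos (F 0 0)} := by
  ext F
  simp only [dualCones, IsPosFunc, hone, dPair_fin_one, Set.mem_ofPred_eq]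
  exact ⟨fun h v hv => h (Matrix.of fun _ _ => v) hv, fun h A hA => h _ hA⟩

end Pairing

section StarPairing
variable {V : Type*} [AddCommGroup V] [Module ℂ V] [StarAddMonoid V] [StarModule ℂ V] {n : ℕ}

theorem dPair_starFunc_transpose (F : Matrix (Fin n) (Fin n) (V →ₗ[ℂ] ℂ))
    (M : Matrix (Fin n) (Fin n) V) :
    dPair (Matrix.of fun i j => starFunc (F j i)) M = star (dPair F (star M)) := by
  simp only [dPair, Matrix.of_apply, starFunc, LinearMap.coe_mk, AddHom.coe_mk,
    Matrix.star_apply, star_sum]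
  exact sum_comm

theorem eq_zero_of_dPair_eq_zero_of_selfAdjoint (H : Matrix (Fin n) (Fin n) (V →ₗ[ℂ] ℂ))
    (h : ∀ M : Matrix (Fin n) (Fin n) V, star M = M → dPair H M = 0) : H = 0 := by
  have hall : ∀ M, dPair H M = 0 := fun M => by
    rw [← realPart_add_I_smul_imaginaryPart M, dPair_add_right, dPair_smul_right,
      h _ (realPart M).2, h _ (imaginaryPart M).2, mul_zero, add_zero]
  ext i j v
  simpa [dPair_single] using hall (Matrix.single i j v)

end StarPairing

section DualCones
variable {V : Type*} [AddCommGroup V] [Module ℂ V] [StarAddMonoid V]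
  {P : ∀ n : ℕ, Set (Matrix (Fin n) (Fin n) V)} {n : ℕ} {F : Matrix (Fin n) (Fin n) (V →ₗ[ℂ] ℂ)}

theorem exists_mem_sub_eq_of_isMatrixOrderUnit {e : V}
    (hsmul : ∀ r : ℝ, 0 ≤ r → ∀ M ∈ P n, (r : ℂ) • M ∈ P n) (hunit : IsMatrixOrderUnit P e)
    {M : Matrix (Fin n) (Fin n) V} (hM : star M = M) : ∃ A ∈ P n, ∃ B ∈ P n, A - B = M := by
  obtain ⟨r₀, hr₀, he⟩ := hunit.2 n 0 (star_zero _)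
  obtain ⟨r, hr, hrM⟩ := hunit.2 n M hM
  have hre := hsmul (r / r₀) (by positivity) _ he
  rw [sub_zero, smul_smul, ← Complex.ofReal_mul, div_mul_cancel₀ _ hr₀.ne'] at hre
  exact ⟨_, hre, _, hrM, sub_sub_cancel _ _⟩

theorem star_dPair_of_mem_dualCones
    (hspan : ∀ M : Matrix (Fin n) (Fin n) V, star M = M → ∃ A ∈ P n, ∃ B ∈ P n, A - B = M)
    (hF : F ∈ dualCones P n) {M : Matrix (Fin n) (Fin n) V} (hM : star M = M) :
    star (dPair F M) = dPair F M := by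
  obtain ⟨A, hA, B, hB, rfl⟩ := hspan M hM
  rw [dPair_sub_right, star_sub, (IsSelfAdjoint.of_nonneg (hF A hA)).star_eq,
    (IsSelfAdjoint.of_nonneg (hF B hB)).star_eq]

theorem eq_starFunc_of_mem_dualCones [StarModule ℂ V]
    (hspan : ∀ M : Matrix (Fin n) (Fin n) V, star M = M → ∃ A ∈ P n, ∃ B ∈ P n, A - B = M)
    (hF : F ∈ dualCones P n) (i j : Fin n) : F i j = starFunc (F j i) := by
  have h := eq_zero_of_dPair_eq_zero_of_selfAdjoint (F - Matrix.of fun i j => starFunc (F j i))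
    fun M hM => by
      rw [dPair_sub_left, dPair_starFunc_transpose, hM, star_dPair_of_mem_dualCones hspan hF hM,
        sub_self]
  exact sub_eq_zero.1 (congrFun (congrFun h i) j)

theorem eq_zero_of_mem_dualCones_of_neg_mem [StarModule ℂ V]
    (hspan : ∀ M : Matrix (Fin n) (Fin n) V, star M = M → ∃ A ∈ P n, ∃ B ∈ P n, A - B = M)
    (hF : F ∈ dualCones P n) (hnF : -F ∈ dualCones P n) : F = 0 := by
  have hzero : ∀ A ∈ P n, dPair F A = 0 := fun A hA =>
    le_antisymm (by simpa [dPair_neg_left] using hnF A hA) (hF A hA)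
  refine eq_zero_of_dPair_eq_zero_of_selfAdjoint F fun M hM => ?_
  obtain ⟨A, hA, B, hB, rfl⟩ := hspan M hM
  rw [dPair_sub_right, hzero A hA, hzero B hB, sub_self]

end DualCones

section Functionals
variable {V : Type*} [AddCommGroup V] [Module ℂ V] {pos : Set V} {e : V}

theorem IsPosFunc.norm_apply_le {g : V →ₗ[ℂ] ℂ} (hg : IsPosFunc pos g) {w : V} {a b : ℝ}
    (ha : 0 < a) (hb : 0 < b) (hle : (a : ℂ) • e - w ∈ pos) (hge : (b : ℂ) • e + w ∈ pos) :
    ‖g w‖ ≤ (a + b) * (g e).re := by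
  have h₁ := Complex.nonneg_iff.1 (hg _ hle)
  have h₂ := Complex.nonneg_iff.1 (hg _ hge)
  simp only [map_sub, map_add, map_smul, smul_eq_mul, Complex.sub_re, Complex.sub_im,
    Complex.add_re, Complex.add_im, Complex.re_ofReal_mul, Complex.im_ofReal_mul] at h₁ h₂
  have him_e : (g e).im = 0 :=
    (mul_eq_zero.1 (by linarith : (a + b) * (g e).im = 0)).resolve_left (by positivity)
  have hre_e : 0 ≤ (g e).re := by nlinarith
  rw [him_e, mul_zero] at h₁
  rw [← Complex.abs_re_eq_norm.2 (by linarith [h₁.2]), abs_le]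
  constructor <;> nlinarith

theorem IsBddFunc.add {f g : V →ₗ[ℂ] ℂ} (hf : IsBddFunc pos e f) (hg : IsBddFunc pos e g) :
    IsBddFunc pos e (f + g) := by
  obtain ⟨c, hc⟩ := hf
  obtain ⟨d, hd⟩ := hg
  exact ⟨c + d, fun v => (norm_add_le _ _).trans (by rw [add_mul]; exact add_le_add (hc v) (hd v))⟩

theorem IsBddFunc.sub {f g : V →ₗ[ℂ] ℂ} (hf : IsBddFunc pos e f) (hg : IsBddFunc pos e g) :
    IsBddFunc pos e (f - g) := by
  obtain ⟨c, hc⟩ := hf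
  obtain ⟨d, hd⟩ := hg
  exact ⟨c + d, fun v => (norm_sub_le _ _).trans (by rw [add_mul]; exact add_le_add (hc v) (hd v))⟩

theorem IsBddFunc.smul {f : V →ₗ[ℂ] ℂ} (hf : IsBddFunc pos e f) (a : ℂ) :
    IsBddFunc pos e (a • f) := by
  obtain ⟨c, hc⟩ := hf
  refine ⟨‖a‖ * c, fun v => ?_⟩
  rw [LinearMap.smul_apply, norm_smul, mul_assoc]
  exact mul_le_mul_of_nonneg_left (hc v) (norm_nonneg a)

end Functionals

section OrderUnit
variable {V : Type*} [AddCommGroup V] [Module ℂ V] [StarAddMonoid V] {pos : Set V} {e : V}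

/-- The order-unit axiom of an AOU space (the third conjunct of `IsAOU`). -/
def IsOrderUnit (pos : Set V) (e : V) : Prop :=
  ∀ v : V, star v = v → ∃ r : ℝ, 0 < r ∧ (r : ℂ) • e - v ∈ pos

theorem IsOrderUnit.apply_nonneg (hunit : IsOrderUnit pos e) {g : V →ₗ[ℂ] ℂ}
    (hg : IsPosFunc pos g) : 0 ≤ g e := by
  obtain ⟨r, hr, hre⟩ := hunit 0 (star_zero _)
  have h := hg _ hre
  rw [sub_zero, map_smul, smul_eq_mul] at h
  simpa [hr.ne'] using mul_nonneg (inv_nonneg.2 (Complex.zero_le_real.2 hr.le)) h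

theorem IsOrderUnit.exists_norm_le [StarModule ℂ V] (hunit : IsOrderUnit pos e) (v : V) :
    ∃ C : ℝ, ∀ g : V →ₗ[ℂ] ℂ, IsPosFunc pos g → ‖g v‖ ≤ C * (g e).re := by
  have hsa : ∀ w : V, star w = w →
      ∃ C : ℝ, ∀ g : V →ₗ[ℂ] ℂ, IsPosFunc pos g → ‖g w‖ ≤ C * (g e).re := fun w hw => by
    obtain ⟨a, ha, hle⟩ := hunit w hw
    obtain ⟨b, hb, hge⟩ := hunit (-w) (by rw [star_neg, hw])
    rw [sub_neg_eq_add] at hge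
    exact ⟨a + b, fun g hg => hg.norm_apply_le ha hb hle hge⟩
  obtain ⟨C₁, h₁⟩ := hsa _ (realPart v).2
  obtain ⟨C₂, h₂⟩ := hsa _ (imaginaryPart v).2
  refine ⟨C₁ + C₂, fun g hg => ?_⟩
  rw [← realPart_add_I_smul_imaginaryPart v, map_add, map_smul, smul_eq_mul, add_mul]
  calc _ ≤ ‖g (realPart v)‖ + ‖Complex.I * g (imaginaryPart v)‖ := norm_add_le _ _
    _ = ‖g (realPart v)‖ + ‖g (imaginaryPart v)‖ := by rw [norm_mul, Complex.norm_I, one_mul]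
    _ ≤ _ := add_le_add (h₁ g hg) (h₂ g hg)

theorem IsOrderUnit.norm_le_minNorm [StarModule ℂ V] (hunit : IsOrderUnit pos e) {s : V →ₗ[ℂ] ℂ}
    (hs : IsState pos e s) (v : V) : ‖s v‖ ≤ minNorm pos e v := by
  refine le_ciSup (f := fun s : {s // IsState pos e s} => ‖s.1 v‖) ?_ ⟨s, hs⟩
  obtain ⟨C, hC⟩ := hunit.exists_norm_le v
  refine ⟨C, ?_⟩
  rintro _ ⟨⟨s, hse, hspos⟩, rfl⟩
  simpa [hse] using hC s hspos

/-- A positive functional is `g e` times a state, or zero when `g e = 0`. -/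
theorem IsPosFunc.norm_apply_le_minNorm [StarModule ℂ V] (hunit : IsOrderUnit pos e) {g : V →ₗ[ℂ] ℂ}
    (hg : IsPosFunc pos g) (v : V) : ‖g v‖ ≤ (g e).re * minNorm pos e v := by
  obtain ⟨hre, him⟩ := Complex.nonneg_iff.1 (hunit.apply_nonneg hg)
  rcases hre.eq_or_lt with h0 | hpos
  · obtain ⟨C, hC⟩ := hunit.exists_norm_le v
    simpa [← h0] using hC g hg
  set t := (g e).re
  have hge : g e = t := Complex.ext rfl (by simp [him])
  have hs : IsState pos e ((t⁻¹ : ℂ) • g) := by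
    refine ⟨by simp [hge, hpos.ne'], fun w hw => ?_⟩
    exact mul_nonneg (inv_nonneg.2 (Complex.zero_le_real.2 hpos.le)) (hg w hw)
  calc ‖g v‖ = t * ‖((t⁻¹ : ℂ) • g) v‖ := by
        simp [norm_inv, abs_of_pos hpos, hpos.ne']
    _ ≤ t * minNorm pos e v := mul_le_mul_of_nonneg_left (hunit.norm_le_minNorm hs v) hpos.le

theorem IsPosFunc.isBddFunc [StarModule ℂ V] (hunit : IsOrderUnit pos e) {g : V →ₗ[ℂ] ℂ}
    (hg : IsPosFunc pos g) : IsBddFunc pos e g :=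
  ⟨_, hg.norm_apply_le_minNorm hunit⟩

end OrderUnit

section Polarization
variable {W : Type*} [AddCommGroup W] [Module ℂ W] {n : ℕ}

def sesqForm (A : Matrix (Fin n) (Fin n) W) (x y : Fin n → ℂ) : W :=
  ∑ k, ∑ l, (star (x k) * y l) • A k l

theorem mconj_replicateCol_apply (x : Fin n → ℂ) (A : Matrix (Fin n) (Fin n) W) :
    mconj (Matrix.replicateCol (Fin 1) x) A 0 0 = sesqForm A x x :=
  rfl

theorem sesqForm_single (A : Matrix (Fin n) (Fin n) W) (i j : Fin n) :
    sesqForm A (Pi.single i 1) (Pi.single j 1) = A i j := by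
  simp [sesqForm, Pi.single_apply, ite_smul]

theorem four_smul_sesqForm (A : Matrix (Fin n) (Fin n) W) (x y : Fin n → ℂ) :
    (4 : ℂ) • sesqForm A x y =
      sesqForm A (x + y) (x + y) - sesqForm A (x - y) (x - y) -
        Complex.I • (sesqForm A (x + Complex.I • y) (x + Complex.I • y) -
          sesqForm A (x - Complex.I • y) (x - Complex.I • y)) := by
  simp only [sesqForm, smul_sum, ← sum_sub_distrib]
  refine sum_congr rfl fun k _ => sum_congr rfl fun l _ => ?_
  simp only [Pi.add_apply, Pi.sub_apply, Pi.smul_apply, smul_eq_mul, star_add, star_sub,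
    star_mul', Complex.star_def, Complex.conj_I]
  match_scalars
  linear_combination (2 * (starRingEnd ℂ (x k) * y l - starRingEnd ℂ (y k) * x l)) * Complex.I_sq

end Polarization

theorem isBddFunc_of_mem_dualCones {V : Type*} [AddCommGroup V] [Module ℂ V] [StarAddMonoid V]
    [StarModule ℂ V] {pos : Set V} {e : V} {P : ∀ n : ℕ, Set (Matrix (Fin n) (Fin n) V)} {n : ℕ}
    (hunit : IsOrderUnit pos e) (hone : P 1 = {M | M 0 0 ∈ pos})
    (hconj : ∀ X : Matrix (Fin 1) (Fin n) ℂ, ∀ A ∈ P 1, mconj X A ∈ P n)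
    {F : Matrix (Fin n) (Fin n) (V →ₗ[ℂ] ℂ)} (hF : F ∈ dualCones P n) (i j : Fin n) :
    IsBddFunc pos e (F i j) := by
  have hdiag : ∀ x, IsBddFunc pos e (sesqForm F x x) := fun x => by
    have hx := mconj_mem_dualCones (X := Matrix.replicateCol (Fin 1) x) hF (hconj _)
    rw [dualCones_one hone] at hx
    exact IsPosFunc.isBddFunc hunit hx
  have h4 := four_smul_sesqForm F (Pi.single i 1) (Pi.single j 1)
  rw [sesqForm_single] at h4
  rw [← inv_smul_smul₀ (four_ne_zero : (4 : ℂ) ≠ 0) (F i j), h4]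
  exact (((hdiag _).sub (hdiag _)).sub (((hdiag _).sub (hdiag _)).smul _)).smul _

/-- For an operator system structure `{P_n}` on an AOU space, the
entries of any element of the dual cone `P_n^d` are continuous functionals, and the
family `{P_n^d}` is a matrix ordering on `V'` with `P_1^d = (V⁺)^d`. -/
theorem dualCones_isDualMatrixOrdering
    {V : Type*} [AddCommGroup V] [Module ℂ V] [StarAddMonoid V] [StarModule ℂ V]
    (pos : Set V) (e : V) (hA : IsAOU pos e)
    (P : ∀ n : ℕ, Set (Matrix (Fin n) (Fin n) V)) (hP : IsOpSysStructure pos e P) :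
    (∀ (n : ℕ) (F : Matrix (Fin n) (Fin n) (V →ₗ[ℂ] ℂ)), F ∈ dualCones P n →
        ∀ i j, IsBddFunc pos e (F i j)) ∧
    IsDualMatrixOrdering (dualCones P) ∧
    dualCones P 1 = {F | IsPosFunc pos (F 0 0)} := by
  obtain ⟨⟨⟨-, hsmul, -, -, hconj⟩, hunit, -⟩, hone⟩ := hP
  have hspan (n : ℕ) (M : Matrix (Fin n) (Fin n) V) (hM : star M = M) :
      ∃ A ∈ P n, ∃ B ∈ P n, A - B = M :=
    exists_mem_sub_eq_of_isMatrixOrderUnit (hsmul n) hunit hM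
  exact ⟨fun n _ hF => isBddFunc_of_mem_dualCones hA.2.2.1 hone (hconj 1 n) hF,
    ⟨fun n _ hF => eq_starFunc_of_mem_dualCones (hspan n) hF,
      fun _ _ hr _ hF => smul_mem_dualCones hr hF,
      fun _ _ hF _ hG => add_mem_dualCones hF hG,
      fun n _ hF hnF => eq_zero_of_mem_dualCones_of_neg_mem (hspan n) hF hnF,
      fun n m X _ hF => mconj_mem_dualCones hF (hconj m n X.transpose)⟩,
    dualCones_one hone⟩
end
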